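/- arXiv:2103.07705 — 2 statements merged into one kernel-verified Lean document; each statement's English description precedes it below -/
import Mathlib

section
/- If G is a unicyclic graph with n ≥ 4 vertices and α ∈ (-∞,0) ∪ (1,∞), then n·2^α ≤ Σ_{u ∈ V(G)} d_u^α ≤ (n-1)^α + 2^{α+1} + n - 3. Moreover, the lower bound is attained if and only if G is the cycle C_n, and the upper bound is attained if and only if G is the graph obtained from C_3 by attaching n-3 pendant edges to one vertex. -/
open Finset SimpleGraph

/-- A unicyclic graph: connected with as many edges as vertices. -/
def IsUnicyclic {n : ℕ} (G : SimpleGraph (Fin n)) [DecidableRel G.Adj] : Prop :=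
  G.Connected ∧ G.edgeFinset.card = n

/-- The graph `U_n^3`: a triangle on vertices 0,1,2 with n-3 pendant edges attached to 0. -/
def unicyclicStar (n : ℕ) : SimpleGraph (Fin n) :=
  SimpleGraph.fromRel (fun i j => i.val = 0 ∨ (i.val = 1 ∧ j.val = 2))

/-
In a unicyclic graph the degrees satisfy `1 ≤ d_u ≤ n - 1` and `∑ d_u = 2n`, and `f x = x ^ α` is
strictly convex on `[1, ∞)`. Jensen's inequality gives the lower bound, with equality iff every
degree is `2`, i.e. iff `G` is a connected `2`-regular graph, a cycle.

For the upper bound, the cycle of `G` supplies three vertices of degree at least `2`. Bound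
`f (d_u)` on them by the chord of `f` over `[2, n - 1]`, and on the other vertices by the parallel
line through `(1, f 1)`, which lies above the chord over `[1, n - 1]`. Summing this affine
majorant and using `∑ d_u = 2n` gives the bound. Equality forces every degree to an end of its
chord, i.e. the degree sequence `(n - 1, 2, 2, 1, …, 1)`, and `U_n^3` is the only graph with it.
-/

theorem strictConvexOn_rpow_of_neg {p : ℝ} (hp : p < 0) :
    StrictConvexOn ℝ (Set.Ioi 0) fun x : ℝ => x ^ p := by
  refine strictConvexOn_of_deriv2_pos' (convex_Ioi 0)
    (fun x hx => (Real.continuousAt_rpow_const x p (.inl hx.ne')).continuousWithinAt) ?_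
  intro x hx
  rw [Real.iter_deriv_rpow_const]
  have : 0 < (descPochhammer ℝ 2).eval p := by
    simp only [descPochhammer_succ_right, descPochhammer_zero, Polynomial.eval_mul,
      Polynomial.eval_X, Polynomial.eval_sub, Polynomial.eval_natCast, Polynomial.eval_one]
    norm_num
    nlinarith
  exact mul_pos this (Real.rpow_pos_of_pos hx _)

theorem StrictConvexOn.card_mul_le_sum {s : Set ℝ} {f : ℝ → ℝ} (hf : StrictConvexOn ℝ s f)
    {ι : Type*} [Fintype ι] {x : ι → ℝ} {m : ℝ} (hx : ∀ i, x i ∈ s)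
    (hm : ∑ i, x i = Fintype.card ι * m) :
    Fintype.card ι * f m ≤ ∑ i, f (x i) ∧
      (∑ i, f (x i) = Fintype.card ι * f m ↔ ∀ i, x i = m) := by
  cases isEmpty_or_nonempty ι
  · simp
  have hN : (0 : ℝ) < Fintype.card ι := by exact_mod_cast Fintype.card_pos
  have hw : ∑ _i : ι, (Fintype.card ι : ℝ)⁻¹ = 1 := by
    simp [Finset.card_univ, hN.ne']
  have hmean : ∑ i, (Fintype.card ι : ℝ)⁻¹ • x i = m := by
    rw [← Finset.smul_sum, hm, smul_eq_mul, inv_mul_cancel_left₀ hN.ne']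
  have hw0 : ∀ i ∈ (univ : Finset ι), 0 < (Fintype.card ι : ℝ)⁻¹ := fun _ _ =>
    inv_pos.2 hN
  have jensen := hf.convexOn.map_sum_le (hw0 · · |>.le) hw (fun i _ => hx i)
  have eq_iff := hf.map_sum_eq_iff hw0 hw (fun i _ => hx i)
  rw [hmean, ← Finset.smul_sum, smul_eq_mul] at jensen eq_iff
  constructor
  · rwa [le_inv_mul_iff₀ hN] at jensen
  · rw [eq_inv_mul_iff_mul_eq₀ hN.ne', eq_comm] at eq_iff
    simpa using eq_iff

theorem ConvexOn.le_secant {s : Set ℝ} {f : ℝ → ℝ} (hf : ConvexOn ℝ s f) {a b x : ℝ}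
    (ha : a ∈ s) (hb : b ∈ s) (hax : a ≤ x) (hxb : x ≤ b) :
    f x ≤ f a + (x - a) * slope f a b := by
  rcases hax.eq_or_lt with rfl | hax
  · simp
  have hx : x ∈ s := hf.1.ordConnected.out ha hb ⟨hax.le, hxb⟩
  have := hf.secant_mono ha hx hb hax.ne' (hax.trans_le hxb).ne' hxb
  rw [div_le_iff₀ (sub_pos.2 hax)] at this
  rw [slope_def_field]
  linarith

theorem StrictConvexOn.lt_secant {s : Set ℝ} {f : ℝ → ℝ} (hf : StrictConvexOn ℝ s f)
    {a b x : ℝ} (ha : a ∈ s) (hb : b ∈ s) (hax : a < x) (hxb : x < b) :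
    f x < f a + (x - a) * slope f a b := by
  have := hf.secant_strict_mono_aux2 ha hb hax hxb
  rw [div_lt_iff₀ (sub_pos.2 hax)] at this
  rw [slope_def_field]
  linarith

theorem StrictConvexOn.lt_add_mul_slope {s : Set ℝ} {f : ℝ → ℝ}
    (hf : StrictConvexOn ℝ s f) {a b x M : ℝ} (ha : a ∈ s) (hM : M ∈ s) (hab : a < b)
    (hbM : b < M) (hax : a < x) (hxM : x ≤ M) :
    f x < f a + (x - a) * slope f b M := by
  have hle := hf.convexOn.le_secant ha hM hax.le hxM
  have hslope : slope f a M < slope f b M := by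
    simpa only [slope_def_field] using hf.secant_strict_mono_aux3 ha hM hab hbM
  nlinarith

section DegreeSequence

variable {ι : Type*}

structure IsStarDegreeSeq [Fintype ι] (d : ι → ℕ) (v w x : ι) : Prop where
  ne_vw : v ≠ w
  ne_vx : v ≠ x
  ne_wx : w ≠ x
  hub : d v + 1 = Fintype.card ι
  left : d w = 2
  right : d x = 2
  leaf : ∀ u, u ≠ v → u ≠ w → u ≠ x → d u = 1

variable [DecidableEq ι]

noncomputable def chordMajorant (f : ℝ → ℝ) (M : ℝ) (T : Finset ι) (x : ι → ℝ) (i : ι) : ℝ :=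
  if i ∈ T then f 2 + (x i - 2) * slope f 2 M else f 1 + (x i - 1) * slope f 2 M

theorem chordMajorant_of_mem {f : ℝ → ℝ} {M : ℝ} {T : Finset ι} {x : ι → ℝ} {i : ι}
    (hi : i ∈ T) : chordMajorant f M T x i = f 2 + (x i - 2) * slope f 2 M :=
  if_pos hi

theorem chordMajorant_of_notMem {f : ℝ → ℝ} {M : ℝ} {T : Finset ι} {x : ι → ℝ}
    {i : ι} (hi : i ∉ T) : chordMajorant f M T x i = f 1 + (x i - 1) * slope f 2 M :=
  if_neg hi

theorem map_le_chordMajorant {f : ℝ → ℝ} (hf : StrictConvexOn ℝ (Set.Ici 1) f) {M : ℝ}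
    (hM : 2 < M) {T : Finset ι} {x : ι → ℝ} {i : ι} (hx : 1 ≤ x i) (hxM : x i ≤ M)
    (hT : i ∈ T → 2 ≤ x i) :
    f (x i) ≤ chordMajorant f M T x i ∧ (f (x i) = chordMajorant f M T x i →
      (i ∈ T → x i = 2 ∨ x i = M) ∧ (i ∉ T → x i = 1)) := by
  have h1 : (1 : ℝ) ∈ Set.Ici 1 := Set.self_mem_Ici
  have h2 : (2 : ℝ) ∈ Set.Ici 1 := by norm_num
  have hM1 : M ∈ Set.Ici (1 : ℝ) := by simp only [Set.mem_Ici]; linarith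
  by_cases hi : i ∈ T
  · rw [chordMajorant_of_mem hi]
    refine ⟨hf.convexOn.le_secant h2 hM1 (hT hi) hxM,
      fun heq => ⟨fun _ => ?_, fun h => (h hi).elim⟩⟩
    by_contra! hne
    exact (hf.lt_secant h2 hM1 ((hT hi).lt_of_ne hne.1.symm) (hxM.lt_of_ne hne.2)).ne heq
  · rw [chordMajorant_of_notMem hi]
    rcases hx.eq_or_lt with hx1 | hx1
    · simp [← hx1, hi]
    · have := hf.lt_add_mul_slope h1 hM1 one_lt_two hM hx1 hxM
      exact ⟨this.le, fun heq => (this.ne heq).elim⟩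

variable [Fintype ι]

theorem sum_chordMajorant (f : ℝ → ℝ) {T : Finset ι} (hT : #T = 3) {x : ι → ℝ}
    (hsum : ∑ i, x i = 2 * Fintype.card ι) (hN : 3 < Fintype.card ι) :
    ∑ i, chordMajorant f (Fintype.card ι - 1) T x i =
      f (Fintype.card ι - 1) + 2 * f 2 + (Fintype.card ι - 3) * f 1 := by
  have hTc : (#Tᶜ : ℝ) = Fintype.card ι - 3 := by
    rw [card_compl, Nat.cast_sub (hT ▸ card_le_univ T), hT]; rfl
  have hslope : slope f 2 (Fintype.card ι - 1) * (Fintype.card ι - 1 - 2) =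
      f (Fintype.card ι - 1) - f 2 := by
    have : (3 : ℝ) < Fintype.card ι := by exact_mod_cast hN
    rw [slope_def_field, div_mul_cancel₀ _ (by linarith : (0 : ℝ) < _).ne']
  rw [← sum_add_sum_compl T] at hsum
  rw [← sum_add_sum_compl T]
  rw [sum_congr rfl fun i hi => chordMajorant_of_mem hi,
    sum_congr rfl fun i hi => chordMajorant_of_notMem (mem_compl.1 hi)]
  simp only [sum_add_distrib, ← sum_mul, sum_sub_distrib, sum_const, nsmul_eq_mul, hT, hTc]
  linear_combination slope f 2 (Fintype.card ι - 1) * hsum + hslope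

theorem IsStarDegreeSeq.sum_map {d : ι → ℕ} {v w x : ι} (h : IsStarDegreeSeq d v w x)
    (f : ℝ → ℝ) :
    ∑ i, f (d i) = f (Fintype.card ι - 1) + 2 * f 2 + (Fintype.card ι - 3) * f 1 := by
  have hvwx : ({v, w, x} : Finset ι).card = 3 := card_eq_three.2 ⟨v, w, x, h.1, h.2, h.3, rfl⟩
  have hcompl : ∑ i ∈ {v, w, x}ᶜ, f (d i) = ((Fintype.card ι - 3 : ℕ) : ℝ) * f 1 := by
    rw [sum_congr rfl fun i hi => ?_, sum_const, card_compl, hvwx, nsmul_eq_mul]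
    simp only [mem_compl, mem_insert, mem_singleton, not_or] at hi
    rw [h.leaf i hi.1 hi.2.1 hi.2.2, Nat.cast_one]
  have hN : 3 ≤ Fintype.card ι := hvwx ▸ card_le_univ _
  have hv : (d v : ℝ) = Fintype.card ι - 1 := by rw [← h.hub]; push_cast; ring
  rw [← sum_add_sum_compl {v, w, x}, hcompl, sum_insert (by simp [h.1, h.2]),
    sum_pair h.3, hv, h.left, h.right, Nat.cast_sub hN]
  push_cast
  ring

theorem exists_isStarDegreeSeq {d : ι → ℕ} (hN : 4 ≤ Fintype.card ι)
    (hsum : ∑ i, d i = 2 * Fintype.card ι) {T : Finset ι} (hT : #T = 3)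
    (hT_ends : ∀ i ∈ T, d i = 2 ∨ d i + 1 = Fintype.card ι) (hleaf : ∀ i ∉ T, d i = 1) :
    ∃ v w x, IsStarDegreeSeq d v w x := by
  obtain ⟨a, b, c, hab, hac, hbc, rfl⟩ := card_eq_three.1 hT
  have hcompl : ∑ i ∈ {a, b, c}ᶜ, d i = Fintype.card ι - 3 := by
    rw [sum_congr rfl fun i hi => hleaf i (mem_compl.1 hi), sum_const, smul_eq_mul, mul_one,
      card_compl, card_eq_three.2 ⟨a, b, c, hab, hac, hbc, rfl⟩]
  rw [← sum_add_sum_compl {a, b, c}, hcompl, sum_insert (by simp [hab, hac]),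
    sum_pair hbc] at hsum
  have leaf : ∀ u, u ≠ a → u ≠ b → u ≠ c → d u = 1 := fun u hua hub huc =>
    hleaf u (by simp [hua, hub, huc])
  rcases hT_ends a (by simp) with ha | ha <;> rcases hT_ends b (by simp) with hb | hb <;>
    rcases hT_ends c (by simp) with hc | hc
  all_goals first
    | omega
    | exact ⟨a, b, c, hab, hac, hbc, ha, hb, hc, leaf⟩
    | exact ⟨b, a, c, hab.symm, hbc, hac, hb, ha, hc, fun u h1 h2 h3 => leaf u h2 h1 h3⟩
    | exact ⟨c, a, b, hac.symm, hbc.symm, hab, hc, ha, hb, fun u h1 h2 h3 => leaf u h2 h3 h1⟩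

theorem sum_map_le_of_three_two_le {f : ℝ → ℝ} (hf : StrictConvexOn ℝ (Set.Ici 1) f)
    {d : ι → ℕ} (hN : 4 ≤ Fintype.card ι) (hd : ∀ i, 1 ≤ d i)
    (hd_lt : ∀ i, d i < Fintype.card ι) (hsum : ∑ i, d i = 2 * Fintype.card ι) {T : Finset ι}
    (hT : #T = 3) (hT2 : ∀ i ∈ T, 2 ≤ d i) :
    ∑ i, f (d i) ≤ f (Fintype.card ι - 1) + 2 * f 2 + (Fintype.card ι - 3) * f 1 ∧
    (∑ i, f (d i) = f (Fintype.card ι - 1) + 2 * f 2 + (Fintype.card ι - 3) * f 1 →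
      ∃ v w x, IsStarDegreeSeq d v w x) := by
  have hd_le : ∀ i, (d i : ℝ) ≤ Fintype.card ι - 1 := fun i => by
    rw [le_sub_iff_add_le]; exact_mod_cast hd_lt i
  have hM : (2 : ℝ) < Fintype.card ι - 1 := by
    have : (4 : ℝ) ≤ Fintype.card ι := by exact_mod_cast hN
    linarith
  have hmaj := fun i => map_le_chordMajorant hf hM (T := T) (x := fun i => (d i : ℝ)) (i := i)
    (by exact_mod_cast hd i) (hd_le i) fun hi => by exact_mod_cast hT2 i hi
  have hsum_maj :=
    sum_chordMajorant f hT (x := fun i => (d i : ℝ)) (by exact_mod_cast hsum) hN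
  refine ⟨hsum_maj ▸ sum_le_sum fun i _ => (hmaj i).1, fun heq => ?_⟩
  have hends := fun i => (hmaj i).2 <|
    (sum_eq_sum_iff_of_le fun i _ => (hmaj i).1).1 (heq.trans hsum_maj.symm) i (mem_univ i)
  refine exists_isStarDegreeSeq hN hsum hT (fun i hi => ?_) fun i hi => ?_
  · rcases (hends i).1 hi with h | h
    · exact .inl (by exact_mod_cast h)
    · exact .inr (by rw [eq_sub_iff_add_eq] at h; exact_mod_cast h)
  · exact_mod_cast (hends i).2 hi

end DegreeSequence

namespace SimpleGraph

variable {V W : Type*} [Fintype V] [Fintype W]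

theorem eq_of_le_of_degree_le {G H : SimpleGraph V} [DecidableRel G.Adj] [DecidableRel H.Adj]
    (hle : G ≤ H) (hdeg : ∀ v, H.degree v ≤ G.degree v) : G = H := by
  ext v w
  have : G.neighborFinset v = H.neighborFinset v :=
    eq_of_subset_of_card_le (fun w => by simpa using @hle v w) (by simpa using hdeg v)
  simpa using congrArg (w ∈ ·) this

theorem nonempty_iso_of_le_comap {G : SimpleGraph V} {H : SimpleGraph W} [DecidableRel G.Adj]
    [DecidableRel H.Adj] (σ : W ≃ V) (hle : H ≤ G.comap σ)
    (hdeg : ∀ w, G.degree (σ w) ≤ H.degree w) : Nonempty (G ≃g H) := by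
  classical
  obtain rfl : H = G.comap σ :=
    eq_of_le_of_degree_le hle fun w => (Iso.comap σ G).degree_eq w ▸ hdeg w
  exact ⟨(Iso.comap σ G).symm⟩

theorem Walk.IsCycle.two_le_degree {G : SimpleGraph V} [DecidableRel G.Adj] {u v : V}
    {c : G.Walk u u} (hc : c.IsCycle) (hv : v ∈ c.support) : 2 ≤ G.degree v := by
  rw [← hc.ncard_neighborSet_toSubgraph_eq_two hv, ← card_neighborSet_eq_degree,
    ← Nat.card_eq_fintype_card, Nat.card_coe_set_eq]
  exact Set.ncard_le_ncard (c.toSubgraph.neighborSet_subset v)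

theorem Walk.IsCycle.exists_three_two_le_degree [DecidableEq V] {G : SimpleGraph V}
    [DecidableRel G.Adj] {u : V} {c : G.Walk u u} (hc : c.IsCycle) :
    ∃ T : Finset V, #T = 3 ∧ ∀ v ∈ T, 2 ≤ G.degree v := by
  have hlen : 3 ≤ #c.support.toFinset := calc
    3 ≤ c.length := hc.three_le_length
    _ = #c.support.tail.toFinset := by
      rw [List.toFinset_card_of_nodup hc.support_nodup, List.length_tail, length_support]; rfl
    _ ≤ #c.support.toFinset := card_le_card fun v hv =>
      List.mem_toFinset.2 (List.mem_of_mem_tail (List.mem_toFinset.1 hv))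
  obtain ⟨T, hTc, hT⟩ := exists_subset_card_eq hlen
  exact ⟨T, hT, fun v hv => hc.two_le_degree (List.mem_toFinset.1 (hTc hv))⟩

theorem cycleGraph_degree_eq_two {n : ℕ} (hn : 3 ≤ n) (i : Fin n) :
    (cycleGraph n).degree i = 2 := by
  obtain ⟨m, rfl⟩ := Nat.exists_eq_add_of_le' hn
  exact cycleGraph_degree_three_le

theorem Connected.nonempty_iso_cycleGraph {G : SimpleGraph V} [DecidableRel G.Adj]
    (hG : G.Connected) (h2 : ∀ v, G.degree v = 2) :
    Nonempty (G ≃g cycleGraph (Fintype.card V)) := by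
  classical
  obtain ⟨v⟩ := hG.nonempty
  have hcycles : G.IsCycles := fun w _ => by
    rw [← Nat.card_coe_set_eq, Nat.card_eq_fintype_card, card_neighborSet_eq_degree, h2]
  have hnbr : (G.neighborSet v).Nonempty := by
    rw [← Set.ncard_pos, ← Nat.card_coe_set_eq, Nat.card_eq_fintype_card,
      card_neighborSet_eq_degree, h2]; norm_num
  obtain ⟨p, hp, hverts⟩ :=
    hcycles.exists_cycle_toSubgraph_verts_eq_connectedComponentSupp rfl hnbr
  have hmem : ∀ w, w ∈ p.support := fun w => by
    rw [← Walk.mem_verts_toSubgraph, hverts, ConnectedComponent.mem_supp_iff,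
      ConnectedComponent.eq]
    exact hG.preconnected w v
  have hham : p.IsHamiltonianCycle := by
    refine ⟨hp, hp.isPath_tail.isHamiltonian_of_mem fun w => ?_⟩
    rw [Walk.support_tail_of_not_nil _ hp.not_nil]
    rcases eq_or_ne w v with rfl | hwv
    · exact Walk.end_mem_tail_support hp.not_nil
    · simpa [hwv] using (Walk.mem_support_iff p).1 (hmem w)
  have hlen := hham.length_eq
  obtain ⟨f, hf⟩ := isContained_iff_exists_le_comap.1
    ((cycleGraph_isContained_iff (hlen ▸ hp.three_le_length)).2 ⟨v, p, hp, hlen⟩)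
  have hbij : Function.Bijective f := (Fintype.bijective_iff_injective_and_card f).2
    ⟨f.injective, Fintype.card_fin _⟩
  refine nonempty_iso_of_le_comap (Equiv.ofBijective f hbij) hf fun i => ?_
  rw [h2, cycleGraph_degree_eq_two (hlen ▸ hp.three_le_length)]

end SimpleGraph

theorem unicyclicStar_adj {n : ℕ} {i j : Fin n} :
    (unicyclicStar n).Adj i j ↔
      i ≠ j ∧
        (i.val = 0 ∨ j.val = 0 ∨ (i.val = 1 ∧ j.val = 2) ∨ (i.val = 2 ∧ j.val = 1)) := by
  simp only [unicyclicStar, fromRel_adj]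
  tauto

instance {n : ℕ} : DecidableRel (unicyclicStar n).Adj :=
  fun _ _ => decidable_of_iff _ unicyclicStar_adj.symm

theorem isStarDegreeSeq_unicyclicStar {n : ℕ} (hn : 3 ≤ n) :
    IsStarDegreeSeq (fun i => (unicyclicStar n).degree i) ⟨0, by omega⟩ ⟨1, by omega⟩
      ⟨2, by omega⟩ := by
  have degree_eq : ∀ (i : Fin n) (s : Finset (Fin n)),
      (∀ j, (unicyclicStar n).Adj i j ↔ j ∈ s) → (unicyclicStar n).degree i = #s := by
    intro i s hs
    rw [← card_neighborFinset_eq_degree]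
    congr 1
    ext j
    simp [hs]
  refine ⟨by simp, by simp, by simp, ?_, ?_, ?_, fun u hu0 hu1 hu2 => ?_⟩
  · have := ((unicyclicStar n).degree_eq_card_sub_one ⟨0, by omega⟩).2 fun j hj => by
      simp [unicyclicStar_adj, hj]
    simp only [this, Fintype.card_fin]
    omega
  · rw [degree_eq _ {⟨0, by omega⟩, ⟨2, by omega⟩} fun j => by
      simp [unicyclicStar_adj, Fin.ext_iff]; omega]
    simp [Fin.ext_iff]
  · rw [degree_eq _ {⟨0, by omega⟩, ⟨1, by omega⟩} fun j => by
      simp [unicyclicStar_adj, Fin.ext_iff]; omega]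
    simp [Fin.ext_iff]
  · simp only [ne_eq, Fin.ext_iff] at hu0 hu1 hu2
    rw [degree_eq _ {⟨0, by omega⟩} fun j => by simp [unicyclicStar_adj, Fin.ext_iff]; omega]
    rfl

theorem IsStarDegreeSeq.isUniversal {V : Type*} [Fintype V] {G : SimpleGraph V}
    [DecidableRel G.Adj] {v w x : V} (h : IsStarDegreeSeq (fun u => G.degree u) v w x) :
    G.IsUniversal v :=
  (G.degree_eq_card_sub_one v).1 (by have := h.hub; omega)

theorem IsStarDegreeSeq.adj {V : Type*} [Fintype V] [DecidableEq V] {G : SimpleGraph V}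
    [DecidableRel G.Adj] {v w x : V} (h : IsStarDegreeSeq (fun u => G.degree u) v w x) :
    G.Adj w x := by
  have hv := h.isUniversal
  obtain ⟨y, hy⟩ : ((G.neighborFinset w).erase v).Nonempty := by
    rw [← card_pos, card_erase_of_mem (by simpa using (hv h.ne_vw).symm),
      card_neighborFinset_eq_degree, h.left]
    norm_num
  simp only [mem_erase, mem_neighborFinset] at hy
  -- the second neighbour `y` of `w` is adjacent to `v` and `w`, so it is not a leaf
  obtain rfl : y = x := by
    by_contra hyx
    have : 1 < G.degree y := by
      rw [← card_neighborFinset_eq_degree, one_lt_card]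
      exact ⟨v, by simpa using (hv (Ne.symm hy.1)).symm, w, by simpa using hy.2.symm, h.ne_vw⟩
    have := h.leaf y hy.1 (G.ne_of_adj hy.2).symm hyx
    omega
  exact hy.2

theorem SimpleGraph.nonempty_iso_unicyclicStar {n : ℕ} {G : SimpleGraph (Fin n)}
    [DecidableRel G.Adj] {v w x : Fin n} (h : IsStarDegreeSeq (fun u => G.degree u) v w x) :
    Nonempty (G ≃g unicyclicStar n) := by
  have hn : 2 < n := by simpa [h.left] using G.degree_lt_card_verts w
  have hs := isStarDegreeSeq_unicyclicStar hn
  set o₀ : Fin n := ⟨0, by omega⟩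
  set o₁ : Fin n := ⟨1, by omega⟩
  set o₂ : Fin n := ⟨2, hn⟩
  obtain ⟨σ, hσ⟩ := Equiv.Perm.exists_extending_pair ![o₀, o₁, o₂] ![v, w, x]
    (by intro i j; fin_cases i <;> fin_cases j <;> simp [o₀, o₁, o₂, Fin.ext_iff])
    (by intro i j; fin_cases i <;> fin_cases j <;>
      simp [h.ne_vw, h.ne_vx, h.ne_wx, h.ne_vw.symm, h.ne_vx.symm, h.ne_wx.symm])
  have hσ₀ : σ o₀ = v := hσ 0
  have hσ₁ : σ o₁ = w := hσ 1
  have hσ₂ : σ o₂ = x := hσ 2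
  refine nonempty_iso_of_le_comap σ (fun i j hij => ?_) fun i => ?_
  · rw [unicyclicStar_adj] at hij
    show G.Adj (σ i) (σ j)
    obtain ⟨hij, hi | hj | ⟨hi, hj⟩ | ⟨hi, hj⟩⟩ := hij
    · obtain rfl : i = o₀ := Fin.ext hi
      exact hσ₀ ▸ h.isUniversal (hσ₀ ▸ σ.injective.ne hij)
    · obtain rfl : j = o₀ := Fin.ext hj
      exact (hσ₀ ▸ h.isUniversal (hσ₀ ▸ σ.injective.ne hij.symm)).symm
    · obtain rfl : i = o₁ := Fin.ext hi
      obtain rfl : j = o₂ := Fin.ext hj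
      exact hσ₁ ▸ hσ₂ ▸ h.adj
    · obtain rfl : i = o₂ := Fin.ext hi
      obtain rfl : j = o₁ := Fin.ext hj
      exact hσ₁ ▸ hσ₂ ▸ h.adj.symm
  · rcases eq_or_ne i o₀ with rfl | h₀
    · rw [hσ₀]
      have hv := h.hub
      have ho := hs.hub
      simp only [Fintype.card_fin] at hv ho
      omega
    rcases eq_or_ne i o₁ with rfl | h₁
    · exact (hσ₁ ▸ h.left).trans_le hs.left.ge
    rcases eq_or_ne i o₂ with rfl | h₂
    · exact (hσ₂ ▸ h.right).trans_le hs.right.ge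
    rw [h.leaf _ (hσ₀ ▸ σ.injective.ne h₀) (hσ₁ ▸ σ.injective.ne h₁)
      (hσ₂ ▸ σ.injective.ne h₂), hs.leaf i h₀ h₁ h₂]

namespace IsUnicyclic

variable {n : ℕ} {G : SimpleGraph (Fin n)} [DecidableRel G.Adj]

theorem sum_degree (hG : IsUnicyclic G) : ∑ u, G.degree u = 2 * n := by
  rw [sum_degrees_eq_twice_card_edges, hG.2]

theorem one_le_degree (hG : IsUnicyclic G) (hn : 2 ≤ n) (u : Fin n) : 1 ≤ G.degree u :=
  haveI : Nontrivial (Fin n) := Fin.nontrivial_iff_two_le.2 hn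
  hG.1.preconnected.degree_pos_of_nontrivial u

theorem exists_isCycle (hG : IsUnicyclic G) : ∃ (u : Fin n) (c : G.Walk u u), c.IsCycle := by
  by_contra! h
  have := IsTree.card_edgeFinset ⟨hG.1, h⟩
  rw [hG.2, Fintype.card_fin] at this
  omega

theorem card_mul_le_sum_degree (hG : IsUnicyclic G) (hn : 3 ≤ n) {f : ℝ → ℝ}
    (hf : StrictConvexOn ℝ (Set.Ici 1) f) :
    n * f 2 ≤ ∑ u, f (G.degree u) ∧
      (∑ u, f (G.degree u) = n * f 2 ↔ Nonempty (G ≃g cycleGraph n)) := by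
  have hd := hG.one_le_degree (by omega)
  obtain ⟨hle, heq⟩ := hf.card_mul_le_sum (x := fun u => (G.degree u : ℝ)) (m := 2)
    (fun u => by simpa using hd u)
    (by rw [Fintype.card_fin]; exact_mod_cast hG.sum_degree.trans (mul_comm 2 n))
  simp only [Fintype.card_fin] at hle heq
  refine ⟨hle, heq.trans ⟨fun h2 => ?_, fun ⟨e⟩ u => ?_⟩⟩
  · have := hG.1.nonempty_iso_cycleGraph fun u => by exact_mod_cast h2 u
    rwa [Fintype.card_fin] at this
  · rw [← e.degree_eq u, cycleGraph_degree_eq_two hn]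
    norm_num

theorem sum_degree_le (hG : IsUnicyclic G) (hn : 4 ≤ n) {f : ℝ → ℝ}
    (hf : StrictConvexOn ℝ (Set.Ici 1) f) :
    ∑ u, f (G.degree u) ≤ f (n - 1) + 2 * f 2 + (n - 3) * f 1 ∧
      (∑ u, f (G.degree u) = f (n - 1) + 2 * f 2 + (n - 3) * f 1 ↔
        Nonempty (G ≃g unicyclicStar n)) := by
  obtain ⟨u, c, hc⟩ := hG.exists_isCycle
  obtain ⟨T, hT, hT2⟩ := hc.exists_three_two_le_degree
  obtain ⟨hle, heq⟩ := sum_map_le_of_three_two_le hf (d := fun u => G.degree u) (by simpa)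
    (hG.one_le_degree (by omega)) (fun u => by simpa using G.degree_lt_card_verts u)
    (by simpa using hG.sum_degree) hT hT2
  simp only [Fintype.card_fin] at hle heq
  refine ⟨hle, fun h => ?_, fun ⟨e⟩ => ?_⟩
  · obtain ⟨v, w, x, hvwx⟩ := heq h
    exact nonempty_iso_unicyclicStar hvwx
  · have := (isStarDegreeSeq_unicyclicStar (by omega : 2 < n)).sum_map f
    simp only [Fintype.card_fin] at this
    rw [← this, ← e.toEquiv.sum_comp fun i => f ((unicyclicStar n).degree i)]
    exact sum_congr rfl fun u _ => by rw [← e.degree_eq u]; rfl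

end IsUnicyclic

theorem stmt6 {n : ℕ} (hn : 4 ≤ n) (G : SimpleGraph (Fin n)) [DecidableRel G.Adj]
    (hG : IsUnicyclic G) (α : ℝ) (hα : α < 0 ∨ 1 < α) :
    ((n : ℝ) * 2 ^ α ≤ ∑ u : Fin n, (G.degree u : ℝ) ^ α) ∧
    (∑ u : Fin n, (G.degree u : ℝ) ^ α ≤ ((n : ℝ) - 1) ^ α + 2 ^ (α + 1) + (n : ℝ) - 3) ∧
    ((∑ u : Fin n, (G.degree u : ℝ) ^ α = (n : ℝ) * 2 ^ α) ↔
      Nonempty (G ≃g SimpleGraph.cycleGraph n)) ∧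
    ((∑ u : Fin n, (G.degree u : ℝ) ^ α = ((n : ℝ) - 1) ^ α + 2 ^ (α + 1) + (n : ℝ) - 3) ↔
      Nonempty (G ≃g unicyclicStar n)) := by
  have hf : StrictConvexOn ℝ (Set.Ici 1) fun x : ℝ => x ^ α := by
    refine StrictConvexOn.subset ?_ (Set.Ici_subset_Ioi.2 one_pos) (convex_Ici 1)
    rcases hα with hα | hα
    · exact strictConvexOn_rpow_of_neg hα
    · exact (strictConvexOn_rpow hα).subset Set.Ioi_subset_Ici_self (convex_Ioi 0)
  have hbound : ((n : ℝ) - 1) ^ α + 2 * 2 ^ α + (n - 3) * 1 ^ α =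
      ((n : ℝ) - 1) ^ α + 2 ^ (α + 1) + (n : ℝ) - 3 := by
    rw [Real.one_rpow, Real.rpow_add two_pos, Real.rpow_one]
    ring
  obtain ⟨hlow, hlow_eq⟩ := hG.card_mul_le_sum_degree (by omega) hf
  obtain ⟨hup, hup_eq⟩ := hG.sum_degree_le hn hf
  rw [hbound] at hup hup_eq
  exact ⟨hlow, hup, hlow_eq, hup_eq⟩
end

section
/- Let G be a unicyclic graph with n ≥ 4 vertices and maximum degree Δ ≥ 3, degree sequence x non-increasing, and q = ⌊n/(Δ-1)⌋. If q = 1 or n = 2Δ-2, then x is majorized by (Δ, n-Δ+1, 2, 1, ..., 1). If q ≥ 2 and n ≠ 2Δ-2, set r = n - q(Δ-1) + 1; then x is majorized by the tuple z with z_j = Δ for 1 ≤ j ≤ q, z_{q+1} = r, and z_j = 1 for q+1 < j ≤ n. -/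
/-!
The degree sequence of a unicyclic graph on `n` vertices has sum `2n`, entries between `1` and
`Δ`, and any two of its entries sum to at most `n + 1`, since two vertices share at most one
edge. Hence its first `k` entries sum to at most `min (kΔ) (n + k)` (the remaining `n - k`
entries are at least `1`), and to at most `n + 1` for `k = 2`. The prefix sums of the extremal
tuples reach exactly these bounds: for `(Δ, n - Δ + 1, 2, 1, …, 1)` they are `Δ`, `n + 1` and
then `n + k`, and for `(Δ, …, Δ, r, 1, …, 1)` with `q = ⌊n / (Δ - 1)⌋` they are
`min (kΔ) (n + k)`.
-/

open Finset SimpleGraph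

namespace SimpleGraph

variable {V : Type*} [Fintype V] [DecidableEq V] {G : SimpleGraph V} [DecidableRel G.Adj]

theorem degree_add_degree_le_card_edgeFinset_add_one {u v : V} (huv : u ≠ v) :
    G.degree u + G.degree v ≤ #G.edgeFinset + 1 := by
  have hunion : G.incidenceFinset u ∪ G.incidenceFinset v ⊆ G.edgeFinset := by
    intro e he
    rcases mem_union.1 he with h | h <;> exact mem_edgeFinset.2 ((G.mem_incidenceFinset _ e).1 h).1
  have hinter : G.incidenceFinset u ∩ G.incidenceFinset v ⊆ {s(u, v)} := by
    intro e he
    rw [mem_inter, mem_incidenceFinset, mem_incidenceFinset] at he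
    simpa using G.incidenceSet_inter_incidenceSet_subset huv he
  rw [← card_incidenceFinset_eq_degree, ← card_incidenceFinset_eq_degree,
    ← card_union_add_card_inter]
  exact add_le_add (card_le_card hunion) ((card_le_card hinter).trans_eq (card_singleton _))

end SimpleGraph

theorem IsUnicyclic.three_le {n : ℕ} {G : SimpleGraph (Fin n)} [DecidableRel G.Adj]
    (hG : IsUnicyclic G) : 3 ≤ n := by
  obtain ⟨hconn, hcard⟩ := hG
  have hpos : 0 < n := Fin.pos_iff_nonempty.2 hconn.nonempty
  have hchoose := G.card_edgeFinset_le_card_choose_two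
  rw [hcard, Fintype.card_fin] at hchoose
  by_contra! h
  interval_cases n <;> simp at hchoose

theorem sum_range_eq_two_mul_card_edgeFinset {n : ℕ} (G : SimpleGraph (Fin n))
    [DecidableRel G.Adj] (σ : Equiv.Perm (Fin n)) {x : ℕ → ℕ}
    (hx : ∀ i : Fin n, x i.val = G.degree (σ i)) :
    ∑ i ∈ range n, x i = 2 * #G.edgeFinset := by
  rw [← Fin.sum_univ_eq_sum_range, ← sum_degrees_eq_twice_card_edges]
  exact (sum_congr rfl fun i _ => hx i).trans (Equiv.sum_comp σ fun v => G.degree v)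

theorem sum_range_add_sub_le_sum_range {x : ℕ → ℕ} {k n : ℕ} (hkn : k ≤ n)
    (hx : ∀ i < n, 1 ≤ x i) : ∑ i ∈ range k, x i + (n - k) ≤ ∑ i ∈ range n, x i := by
  rw [← sum_range_add_sum_Ico x hkn, ← Nat.card_Ico k n, card_eq_sum_ones]
  exact Nat.add_le_add_left (sum_le_sum fun i hi => hx i (mem_Ico.1 hi).2) _

theorem sum_range_eq_add_of_eq_one {z : ℕ → ℕ} {m k : ℕ} (hmk : m ≤ k)
    (hz : ∀ i, m ≤ i → z i = 1) :
    ∑ i ∈ range k, z i = ∑ i ∈ range m, z i + (k - m) := by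
  rw [← sum_range_add_sum_Ico z hmk, sum_congr rfl fun i hi => hz i (mem_Ico.1 hi).1]
  simp

/-- Majorization of `n`-tuples, stated through prefix sums; it is the usual notion when both
tuples are non-increasing. -/
def Majorized (n : ℕ) (x z : ℕ → ℕ) : Prop :=
  (∀ k, k ≤ n - 1 → ∑ i ∈ range k, x i ≤ ∑ i ∈ range k, z i) ∧
    ∑ i ∈ range n, x i = ∑ i ∈ range n, z i

section Majorized

variable {n Δ : ℕ} {x z : ℕ → ℕ}

theorem sum_range_le_min {k : ℕ} (hkn : k ≤ n) (hpos : ∀ i < n, 1 ≤ x i)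
    (hle : ∀ i < n, x i ≤ Δ) (hsum : ∑ i ∈ range n, x i = 2 * n) :
    ∑ i ∈ range k, x i ≤ min (k * Δ) (n + k) := by
  refine le_min ?_ ?_
  · simpa using sum_le_card_nsmul (range k) x Δ fun i hi => hle i ((mem_range.1 hi).trans_le hkn)
  · have := sum_range_add_sub_le_sum_range hkn hpos
    omega

theorem sum_range_eq_min_of_eq_ite {q : ℕ} (hΔ : 2 ≤ Δ) (hq : q = n / (Δ - 1))
    (hz : ∀ i, z i = if i < q then Δ else if i = q then n - q * (Δ - 1) + 1 else 1) (k : ℕ) :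
    ∑ i ∈ range k, z i = min (k * Δ) (n + k) := by
  obtain ⟨d, rfl⟩ : ∃ d, Δ = d + 1 := ⟨Δ - 1, by omega⟩
  rw [Nat.add_sub_cancel] at hq hz
  have hfloor : q * d ≤ n := hq ▸ Nat.div_mul_le_self n d
  have hceil : n < (q + 1) * d := by
    rw [hq, add_mul, one_mul]
    exact Nat.lt_div_mul_add (by omega)
  rcases le_or_gt k q with hkq | hqk
  · have hkd : k * d ≤ q * d := Nat.mul_le_mul_right d hkq
    rw [sum_congr rfl fun i hi => (hz i).trans (if_pos ((mem_range.1 hi).trans_le hkq)),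
      sum_const, card_range, smul_eq_mul, min_eq_left (by linarith)]
  · have hkd : (q + 1) * d ≤ k * d := Nat.mul_le_mul_right d hqk
    have hq1 : ∑ i ∈ range (q + 1), z i = q * (d + 1) + (n - q * d + 1) := by
      rw [sum_range_succ, hz q, if_neg (lt_irrefl q), if_pos rfl,
        sum_congr rfl fun i hi => (hz i).trans (if_pos (mem_range.1 hi)), sum_const, card_range,
        smul_eq_mul]
    have hone (i : ℕ) (hi : q + 1 ≤ i) : z i = 1 := by
      rw [hz i, if_neg (by omega), if_neg (by omega)]
    rw [sum_range_eq_add_of_eq_one hqk hone, hq1, min_eq_right (by linarith), mul_add_one]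
    omega

theorem majorized_of_sum_range_eq_min (hΔ : 2 ≤ Δ) (hpos : ∀ i < n, 1 ≤ x i)
    (hle : ∀ i < n, x i ≤ Δ) (hsum : ∑ i ∈ range n, x i = 2 * n)
    (hz : ∀ k, ∑ i ∈ range k, z i = min (k * Δ) (n + k)) :
    Majorized n x z := by
  simp only [Majorized, hz]
  refine ⟨fun k hk => sum_range_le_min (by omega) hpos hle hsum, ?_⟩
  rw [hsum, min_eq_right (by nlinarith)]
  ring

theorem majorized_of_add_le_of_eq_ite (hn : 3 ≤ n) (hΔn : Δ ≤ n)
    (hpos : ∀ i < n, 1 ≤ x i) (hle : ∀ i < n, x i ≤ Δ) (hsum : ∑ i ∈ range n, x i = 2 * n)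
    (hpair : x 0 + x 1 ≤ n + 1)
    (hz : ∀ i, z i = if i = 0 then Δ else if i = 1 then n - Δ + 1 else if i = 2 then 2 else 1) :
    Majorized n x z := by
  have htail (k : ℕ) (hk : 3 ≤ k) : ∑ i ∈ range k, z i = n + k := by
    rw [sum_range_eq_add_of_eq_one hk fun i hi => by simp only [hz]; split_ifs <;> omega]
    simp [sum_range_succ, hz]
    omega
  refine ⟨fun k hk => ?_, by rw [htail n hn, hsum]; ring⟩
  obtain rfl | rfl | rfl | hk3 : k = 0 ∨ k = 1 ∨ k = 2 ∨ 3 ≤ k := by omega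
  · simp
  · simpa [hz] using hle 0 (by omega)
  · simp [sum_range_succ, hz]
    omega
  · rw [htail k hk3]
    exact (sum_range_le_min (by omega) hpos hle hsum).trans (min_le_right _ _)

end Majorized

theorem stmt14_general {n Δ : ℕ} (G : SimpleGraph (Fin n)) [DecidableRel G.Adj]
    (hG : IsUnicyclic G) (hΔ : G.maxDegree = Δ)
    (σ : Equiv.Perm (Fin n)) (x : ℕ → ℕ)
    (hx : ∀ i : Fin n, x i.val = G.degree (σ i))
    (q : ℕ) (hq : q = n / (Δ - 1)) :
    ((q = 1 ∨ n = 2 * Δ - 2) →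
      ∀ z : ℕ → ℕ,
        (∀ i, z i = if i = 0 then Δ else if i = 1 then n - Δ + 1 else if i = 2 then 2 else 1) →
        (∀ k, k ≤ n - 1 → ∑ i ∈ Finset.range k, x i ≤ ∑ i ∈ Finset.range k, z i) ∧
          ∑ i ∈ Finset.range n, x i = ∑ i ∈ Finset.range n, z i) ∧
    ((2 ≤ q ∧ n ≠ 2 * Δ - 2) →
      ∀ z : ℕ → ℕ,
        (∀ i, z i = if i < q then Δ else if i = q then n - q * (Δ - 1) + 1 else 1) →
        (∀ k, k ≤ n - 1 → ∑ i ∈ Finset.range k, x i ≤ ∑ i ∈ Finset.range k, z i) ∧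
          ∑ i ∈ Finset.range n, x i = ∑ i ∈ Finset.range n, z i) := by
  have hn : 3 ≤ n := hG.three_le
  have : Nontrivial (Fin n) := Fin.nontrivial_iff_two_le.2 (by omega)
  have hsum : ∑ i ∈ range n, x i = 2 * n := by
    rw [sum_range_eq_two_mul_card_edgeFinset G σ hx, hG.2]
  have hpos (i : ℕ) (hi : i < n) : 1 ≤ x i :=
    (hx ⟨i, hi⟩).symm ▸ hG.1.preconnected.degree_pos_of_nontrivial _
  have hle (i : ℕ) (hi : i < n) : x i ≤ Δ :=
    (hx ⟨i, hi⟩).trans_le (hΔ ▸ G.degree_le_maxDegree _)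
  have hpair : x 0 + x 1 ≤ n + 1 := by
    have := degree_add_degree_le_card_edgeFinset_add_one (G := G)
      (σ.injective.ne (show (⟨0, by omega⟩ : Fin n) ≠ ⟨1, by omega⟩ by simp))
    rwa [← hx, ← hx, hG.2] at this
  have hΔn : Δ ≤ n := by
    have := G.maxDegree_lt_card_verts
    rw [hΔ, Fintype.card_fin] at this
    omega
  refine ⟨fun _ z hz => majorized_of_add_le_of_eq_ite hn hΔn hpos hle hsum hpair hz,
    fun ⟨hq2, _⟩ z hz => ?_⟩
  have hΔ2 : 2 ≤ Δ := by
    by_contra! hΔ2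
    rw [show Δ - 1 = 0 by omega, Nat.div_zero] at hq
    omega
  exact majorized_of_sum_range_eq_min hΔ2 hpos hle hsum (sum_range_eq_min_of_eq_ite hΔ2 hq hz)

theorem stmt14 {n Δ : ℕ} (hn : 4 ≤ n) (G : SimpleGraph (Fin n)) [DecidableRel G.Adj]
    (hG : IsUnicyclic G) (hΔ : G.maxDegree = Δ) (hΔ3 : 3 ≤ Δ)
    (σ : Equiv.Perm (Fin n)) (x : ℕ → ℕ)
    (hx : ∀ i : Fin n, x i.val = G.degree (σ i))
    (hdec : ∀ i j : ℕ, i ≤ j → j < n → x j ≤ x i)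
    (q : ℕ) (hq : q = n / (Δ - 1)) :
    ((q = 1 ∨ n = 2 * Δ - 2) →
      ∀ z : ℕ → ℕ,
        (∀ i, z i = if i = 0 then Δ else if i = 1 then n - Δ + 1 else if i = 2 then 2 else 1) →
        (∀ k, k ≤ n - 1 → ∑ i ∈ Finset.range k, x i ≤ ∑ i ∈ Finset.range k, z i) ∧
          ∑ i ∈ Finset.range n, x i = ∑ i ∈ Finset.range n, z i) ∧
    ((2 ≤ q ∧ n ≠ 2 * Δ - 2) →
      ∀ z : ℕ → ℕ,
        (∀ i, z i = if i < q then Δ else if i = q then n - q * (Δ - 1) + 1 else 1) →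
        (∀ k, k ≤ n - 1 → ∑ i ∈ Finset.range k, x i ≤ ∑ i ∈ Finset.range k, z i) ∧
          ∑ i ∈ Finset.range n, x i = ∑ i ∈ Finset.range n, z i) :=
  stmt14_general G hG hΔ σ x hx q hq
end
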